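/- For the optimal discriminator in a GAN, the generator's objective equals 2·JSD(p_data ∥ p_g) − log 4, and hence the global minimum of the generator objective is achieved if and only if p_g = p_data. -/
import Mathlib

open Finset

/-- Gibbs' inequality, nonnegativity part. -/
lemma gibbs_nonneg {α : Type*} [Fintype α] (f g : α → ℝ)
    (hf : ∀ x, 0 < f x) (hg : ∀ x, 0 < g x)
    (hsum : ∑ x, f x = ∑ x, g x) :
    0 ≤ ∑ x, f x * Real.log (f x / g x) := by
  have h : ∑ x, f x * Real.log (g x / f x) ≤ ∑ x, (g x - f x) := by
    apply Finset.sum_le_sum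
    intro x _
    have hx : 0 < g x / f x := div_pos (hg x) (hf x)
    have := Real.log_le_sub_one_of_pos hx
    calc f x * Real.log (g x / f x) ≤ f x * (g x / f x - 1) := by
          exact mul_le_mul_of_nonneg_left this (hf x).le
      _ = g x - f x := by field_simp [(hf x).ne']
  have hsum0 : ∑ x, (g x - f x) = 0 := by
    rw [Finset.sum_sub_distrib, hsum, sub_self]
  have : ∑ x, f x * Real.log (g x / f x) ≤ 0 := by linarith
  have heq : ∑ x, f x * Real.log (f x / g x)
      = - ∑ x, f x * Real.log (g x / f x) := by
    rw [← Finset.sum_neg_distrib]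
    apply Finset.sum_congr rfl
    intro x _
    have hlog : Real.log (f x / g x) = - Real.log (g x / f x) := by
      rw [← Real.log_inv, inv_div]
    rw [hlog]; ring
  rw [heq]
  linarith

/-- Gibbs' inequality, strict case. -/
lemma gibbs_pos {α : Type*} [Fintype α] (f g : α → ℝ)
    (hf : ∀ x, 0 < f x) (hg : ∀ x, 0 < g x)
    (hsum : ∑ x, f x = ∑ x, g x) (hne : f ≠ g) :
    0 < ∑ x, f x * Real.log (f x / g x) := by
  obtain ⟨x0, hx0⟩ : ∃ x, f x ≠ g x := by
    by_contra h
    push_neg at h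
    exact hne (funext h)
  have h : ∑ x, f x * Real.log (g x / f x) < ∑ x, (g x - f x) := by
    apply Finset.sum_lt_sum
    · intro x _
      have hx : 0 < g x / f x := div_pos (hg x) (hf x)
      have := Real.log_le_sub_one_of_pos hx
      calc f x * Real.log (g x / f x) ≤ f x * (g x / f x - 1) := by
            exact mul_le_mul_of_nonneg_left this (hf x).le
        _ = g x - f x := by field_simp [(hf x).ne']
    · refine ⟨x0, Finset.mem_univ _, ?_⟩
      have hx : 0 < g x0 / f x0 := div_pos (hg x0) (hf x0)
      have hne1 : g x0 / f x0 ≠ 1 := by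
        intro h1
        exact hx0 ((div_eq_one_iff_eq (hf x0).ne').mp h1).symm
      have := Real.log_lt_sub_one_of_pos hx hne1
      calc f x0 * Real.log (g x0 / f x0) < f x0 * (g x0 / f x0 - 1) := by
            exact mul_lt_mul_of_pos_left this (hf x0)
        _ = g x0 - f x0 := by field_simp [(hf x0).ne']
  have hsum0 : ∑ x, (g x - f x) = 0 := by
    rw [Finset.sum_sub_distrib, hsum, sub_self]
  have heq : ∑ x, f x * Real.log (f x / g x)
      = - ∑ x, f x * Real.log (g x / f x) := by
    rw [← Finset.sum_neg_distrib]
    apply Finset.sum_congr rfl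
    intro x _
    have hlog : Real.log (f x / g x) = - Real.log (g x / f x) := by
      rw [← Real.log_inv, inv_div]
    rw [hlog]; ring
  rw [heq]
  linarith

/-- For the optimal discriminator `D*(x) = p(x)/(p(x)+q(x))` in a GAN (over a
finite sample space, with densities `p = p_data` and `q = p_g`), the generator
objective `C(G) = E_p[log D*] + E_q[log (1 - D*)]` equals
`2·JSD(p ∥ q) − log 4`, and its global minimum value `−log 4` is achieved
if and only if `q = p`. -/
theorem gan_optimal_generator {α : Type*} [Fintype α] [Nonempty α]
    (p q : α → ℝ) (hp0 : ∀ x, 0 < p x) (hq0 : ∀ x, 0 < q x)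
    (hp1 : ∑ x, p x = 1) (hq1 : ∑ x, q x = 1) :
    (∑ x, p x * Real.log (p x / (p x + q x))
       + ∑ x, q x * Real.log (q x / (p x + q x))
      = 2 * ((1 / 2) * ∑ x, p x * Real.log (p x / ((p x + q x) / 2))
              + (1 / 2) * ∑ x, q x * Real.log (q x / ((p x + q x) / 2)))
        - Real.log 4)
    ∧ ((∑ x, p x * Real.log (p x / (p x + q x))
          + ∑ x, q x * Real.log (q x / (p x + q x))
        = - Real.log 4) ↔ q = p) := by
  have hpq : ∀ x, 0 < p x + q x := fun x => add_pos (hp0 x) (hq0 x)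
  have hlog4 : Real.log 4 = 2 * Real.log 2 := by
    rw [show (4:ℝ) = 2^2 by norm_num, Real.log_pow]; push_cast; ring
  -- pointwise decomposition
  have hpA : ∀ x, p x * Real.log (p x / (p x + q x))
      = p x * Real.log (p x / ((p x + q x) / 2)) - p x * Real.log 2 := by
    intro x
    rw [← mul_sub, ← Real.log_div (div_pos (hp0 x) (by linarith [hpq x])).ne' (by norm_num)]
    congr 2
    rw [div_div, div_eq_div_iff (hpq x).ne' (by linarith [hpq x])]
    ring
  have hqA : ∀ x, q x * Real.log (q x / (p x + q x))
      = q x * Real.log (q x / ((p x + q x) / 2)) - q x * Real.log 2 := by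
    intro x
    rw [← mul_sub, ← Real.log_div (div_pos (hq0 x) (by linarith [hpq x])).ne' (by norm_num)]
    congr 2
    rw [div_div, div_eq_div_iff (hpq x).ne' (by linarith [hpq x])]
    ring
  have hsumP : ∑ x, p x * Real.log (p x / (p x + q x))
      = (∑ x, p x * Real.log (p x / ((p x + q x) / 2))) - Real.log 2 := by
    calc ∑ x, p x * Real.log (p x / (p x + q x))
        = ∑ x, (p x * Real.log (p x / ((p x + q x) / 2)) - p x * Real.log 2) :=
          Finset.sum_congr rfl fun x _ => hpA x
      _ = (∑ x, p x * Real.log (p x / ((p x + q x) / 2)))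
            - (∑ x, p x) * Real.log 2 := by
          rw [Finset.sum_sub_distrib, Finset.sum_mul]
      _ = _ := by rw [hp1]; ring
  have hsumQ : ∑ x, q x * Real.log (q x / (p x + q x))
      = (∑ x, q x * Real.log (q x / ((p x + q x) / 2))) - Real.log 2 := by
    calc ∑ x, q x * Real.log (q x / (p x + q x))
        = ∑ x, (q x * Real.log (q x / ((p x + q x) / 2)) - q x * Real.log 2) :=
          Finset.sum_congr rfl fun x _ => hqA x
      _ = (∑ x, q x * Real.log (q x / ((p x + q x) / 2)))
            - (∑ x, q x) * Real.log 2 := by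
          rw [Finset.sum_sub_distrib, Finset.sum_mul]
      _ = _ := by rw [hq1]; ring
  have hmsum : ∑ x, (p x + q x) / 2 = 1 := by
    rw [← Finset.sum_div, Finset.sum_add_distrib, hp1, hq1]; norm_num
  have hm0 : ∀ x, 0 < (fun x => (p x + q x) / 2) x := fun x => by
    show 0 < (p x + q x) / 2
    linarith [hpq x]
  constructor
  · rw [hsumP, hsumQ, hlog4]; ring
  · constructor
    · intro h
      rw [hsumP, hsumQ, hlog4] at h
      have hA : 0 ≤ ∑ x, p x * Real.log (p x / ((p x + q x) / 2)) :=
        gibbs_nonneg p (fun x => (p x + q x) / 2) hp0 hm0 (by rw [hp1, hmsum])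
      have hB : 0 ≤ ∑ x, q x * Real.log (q x / ((p x + q x) / 2)) :=
        gibbs_nonneg q (fun x => (p x + q x) / 2) hq0 hm0 (by rw [hq1, hmsum])
      by_contra hne
      have hpm : p ≠ fun x => (p x + q x) / 2 := by
        intro hpm
        apply hne
        funext x
        have := congrFun hpm x
        linarith
      have key : 0 < ∑ x, p x * Real.log (p x / ((p x + q x) / 2)) :=
        gibbs_pos p (fun x => (p x + q x) / 2) hp0 hm0 (by rw [hp1, hmsum]) hpm
      linarith
    · intro h
      subst h
      have : ∀ x, q x * Real.log (q x / (q x + q x)) = q x * (- Real.log 2) := by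
        intro x
        congr 1
        have h2 : q x / (q x + q x) = 1 / 2 := by
          rw [show q x + q x = 2 * q x by ring]
          rw [div_eq_div_iff (by linarith [hq0 x]) (by norm_num : (2:ℝ) ≠ 0)]
          ring
        rw [h2, one_div, Real.log_inv]
      have hs : ∑ x, q x * Real.log (q x / (q x + q x))
          = - Real.log 2 := by
        calc ∑ x, q x * Real.log (q x / (q x + q x))
            = ∑ x, q x * (- Real.log 2) := Finset.sum_congr rfl fun x _ => this x
          _ = (∑ x, q x) * (- Real.log 2) := by rw [Finset.sum_mul]
          _ = - Real.log 2 := by rw [hq1]; ring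
      rw [hs, hlog4]; ring
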